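/- For the graded mesh t_n = T(n/N)^r with steps τ_n = t_n − t_{n−1}, and for 0 < α < 1, there exists a constant C depending only on r, α, T such that for every n with 2 ≤ n ≤ N both Σ_{j=⌊n/2⌋}^{n−2} τ_{j+1}³ t_j^{α−2} ≤ C N^{−r(1+α)} n^{r(1+α)−2} and τ_n² t_{n−1}^{α−1} ≤ C N^{−r(1+α)} n^{r(1+α)−2} hold (the sum being zero when ⌊n/2⌋ > n−2). -/

import Mathlib

/-- The graded temporal mesh `t_n = T (n/N)^r` on `[0,T]`. -/
noncomputable def meshT (T r : ℝ) (N : ℕ) (n : ℕ) : ℝ := T * ((n : ℝ) / (N : ℝ)) ^ r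

/-- The time steps `τ_n = t_n - t_{n-1}`. -/
noncomputable def meshTau (T r : ℝ) (N : ℕ) (n : ℕ) : ℝ := meshT T r N n - meshT T r N (n - 1)

/-!
Convexity of `x ↦ x ^ r` (Bernoulli's inequality) gives `τ_n ≤ r t_n / n`, and `t_{j+1} ≤ 2^r t_j`
for `j ≥ 1`. Together they give `τ_m^k t_{m-1}^{s-k} ≲ t_m^s / m^k` whenever `s ≤ k`. With
`s = 1 + α` both claimed bounds are of the form `≲ t_n^{1+α} / n²`, which is the right-hand side up
to the factor `T^{1+α}`: for `k = 2` this is immediate, and for `k = 3` the sum has at most `n`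
terms, each `≲ t_n^{1+α} / n³` because `j + 1 ≥ n / 2`.
-/

theorem rpow_sub_rpow_le_mul_sub {a b r : ℝ} (hr : 1 ≤ r) (ha : 0 ≤ a) (hab : a ≤ b) :
    b ^ r - a ^ r ≤ r * b ^ (r - 1) * (b - a) := by
  obtain rfl | hb := (ha.trans hab).eq_or_lt
  · obtain rfl : a = 0 := le_antisymm hab ha
    simp
  have bernoulli := one_add_mul_self_le_rpow_one_add (s := a / b - 1)
    (by linarith [div_nonneg ha hb.le]) hr
  rw [add_sub_cancel, Real.div_rpow ha hb.le, le_div_iff₀ (by positivity)] at bernoulli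
  have expand : (1 + r * (a / b - 1)) * b ^ r = b ^ r - r * (b ^ r / b) * (b - a) := by
    field_simp; ring
  rw [Real.rpow_sub_one hb.ne']
  linarith

theorem rpow_le_mul_rpow_of_le_mul {a b c p : ℝ} (hb : 0 < b) (hc : 0 < c) (hbca : b ≤ c * a)
    (hp : p ≤ 0) : a ^ p ≤ c ^ (-p) * b ^ p := by
  have ha : 0 < a := pos_of_mul_pos_right (hb.trans_le hbca) hc.le
  have h := Real.rpow_le_rpow_of_nonpos hb hbca hp
  rw [Real.mul_rpow hc.le ha.le] at h
  calc a ^ p = c ^ (-p) * (c ^ p * a ^ p) := by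
        rw [← mul_assoc, ← Real.rpow_add hc, neg_add_cancel, Real.rpow_zero, one_mul]
    _ ≤ c ^ (-p) * b ^ p := by gcongr

theorem pow_mul_rpow_sub_natCast {x : ℝ} (hx : 0 < x) (k : ℕ) (s : ℝ) :
    x ^ k * x ^ (s - k) = x ^ s := by
  rw [← Real.rpow_natCast, ← Real.rpow_add hx, add_sub_cancel]

section GradedMesh

variable {T r : ℝ} {N : ℕ}

theorem meshT_eq (n : ℕ) : meshT T r N n = T * (n : ℝ) ^ r / (N : ℝ) ^ r := by
  rw [meshT, Real.div_rpow (by positivity) (by positivity), mul_div_assoc]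

theorem meshT_nonneg (hT : 0 ≤ T) (n : ℕ) : 0 ≤ meshT T r N n := by
  unfold meshT; positivity

theorem meshT_pos (hT : 0 < T) (hN : N ≠ 0) {n : ℕ} (hn : n ≠ 0) : 0 < meshT T r N n := by
  unfold meshT; positivity

theorem meshT_monotone (hT : 0 ≤ T) (hr : 0 ≤ r) : Monotone (meshT T r N) := by
  intro m n hmn
  unfold meshT
  gcongr

theorem meshTau_nonneg (hT : 0 ≤ T) (hr : 0 ≤ r) (n : ℕ) : 0 ≤ meshTau T r N n :=
  sub_nonneg.mpr (meshT_monotone hT hr (Nat.sub_le n 1))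

theorem meshTau_le (hT : 0 ≤ T) (hr : 1 ≤ r) (n : ℕ) :
    meshTau T r N n ≤ r * meshT T r N n / n := by
  rcases Nat.eq_zero_or_pos n with rfl | hn
  · simp [meshTau]
  have hcast : ((n - 1 : ℕ) : ℝ) = n - 1 := by rw [Nat.cast_sub hn, Nat.cast_one]
  have mvt := rpow_sub_rpow_le_mul_sub hr (by rw [← hcast]; positivity)
    (sub_le_self (n : ℝ) zero_le_one)
  rw [sub_sub_cancel, mul_one, Real.rpow_sub_one (by positivity)] at mvt
  rw [meshTau, meshT_eq, meshT_eq, hcast]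
  calc T * (n : ℝ) ^ r / N ^ r - T * ((n : ℝ) - 1) ^ r / N ^ r
      = T * ((n : ℝ) ^ r - ((n : ℝ) - 1) ^ r) / N ^ r := by ring
    _ ≤ T * (r * ((n : ℝ) ^ r / n)) / N ^ r := by gcongr
    _ = r * (T * (n : ℝ) ^ r / N ^ r) / n := by ring

theorem meshT_succ_le (hT : 0 ≤ T) (hr : 0 ≤ r) {j : ℕ} (hj : 1 ≤ j) :
    meshT T r N (j + 1) ≤ 2 ^ r * meshT T r N j := by
  have hle : ((j + 1 : ℕ) : ℝ) / N ≤ 2 * ((j : ℝ) / N) := by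
    rw [← mul_div_assoc]
    gcongr
    push_cast
    linarith [(Nat.one_le_cast (α := ℝ)).mpr hj]
  unfold meshT
  calc T * (((j + 1 : ℕ) : ℝ) / N) ^ r ≤ T * (2 * ((j : ℝ) / N)) ^ r := by gcongr
    _ = 2 ^ r * (T * ((j : ℝ) / N) ^ r) := by
      rw [Real.mul_rpow zero_le_two (by positivity)]; ring

theorem meshT_rpow_div_sq (hT : 0 ≤ T) {n : ℕ} (hn : n ≠ 0) (s : ℝ) :
    meshT T r N n ^ s / (n : ℝ) ^ 2 = T ^ s * (N : ℝ) ^ (-(r * s)) * (n : ℝ) ^ (r * s - 2) := by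
  rw [meshT, Real.mul_rpow hT (by positivity), ← Real.rpow_mul (by positivity),
    Real.div_rpow (by positivity) (by positivity), Real.rpow_neg (by positivity),
    Real.rpow_sub (by positivity), Real.rpow_two]
  ring

theorem meshTau_pow_mul_rpow_le (hT : 0 < T) (hr : 1 ≤ r) (hN : N ≠ 0) {m : ℕ} (hm : 2 ≤ m)
    (k : ℕ) {s : ℝ} (hs : s ≤ k) :
    meshTau T r N m ^ k * meshT T r N (m - 1) ^ (s - k) ≤
      r ^ k * (2 ^ r) ^ (k - s) * (meshT T r N m ^ s / (m : ℝ) ^ k) := by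
  have hr0 : 0 ≤ r := zero_le_one.trans hr
  have htm : 0 < meshT T r N m := meshT_pos hT hN (by omega)
  have hstep : meshT T r N m ≤ 2 ^ r * meshT T r N (m - 1) := by
    simpa [Nat.sub_add_cancel (by omega : 1 ≤ m)] using
      meshT_succ_le (N := N) hT.le hr0 (by omega : 1 ≤ m - 1)
  have hprev := rpow_le_mul_rpow_of_le_mul htm (by positivity) hstep (by linarith : s - k ≤ 0)
  rw [neg_sub] at hprev
  calc meshTau T r N m ^ k * meshT T r N (m - 1) ^ (s - k)
      ≤ (r * meshT T r N m / m) ^ k * ((2 ^ r) ^ (k - s) * meshT T r N m ^ (s - k)) :=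
        mul_le_mul (pow_le_pow_left₀ (meshTau_nonneg hT.le hr0 m) (meshTau_le hT.le hr m) k)
          hprev (Real.rpow_nonneg (meshT_nonneg hT.le _) _) (by positivity)
    _ = r ^ k * (2 ^ r) ^ (k - s) *
          (meshT T r N m ^ k * meshT T r N m ^ (s - k) / (m : ℝ) ^ k) := by ring
    _ = r ^ k * (2 ^ r) ^ (k - s) * (meshT T r N m ^ s / (m : ℝ) ^ k) := by
        rw [pow_mul_rpow_sub_natCast htm]

theorem sum_meshTau_cube_mul_rpow_le (hT : 0 < T) (hr : 1 ≤ r) (hN : N ≠ 0) {n : ℕ}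
    (hn : 2 ≤ n) {s : ℝ} (hs0 : 0 ≤ s) (hs3 : s ≤ 3) :
    ∑ j ∈ Finset.Icc (n / 2) (n - 2), meshTau T r N (j + 1) ^ 3 * meshT T r N j ^ (s - 3) ≤
      8 * r ^ 3 * (2 ^ r) ^ (3 - s) * (meshT T r N n ^ s / (n : ℝ) ^ 2) := by
  have hr0 : 0 ≤ r := zero_le_one.trans hr
  have htn_nonneg := Real.rpow_nonneg (meshT_nonneg (r := r) (N := N) hT.le n) s
  set B := r ^ 3 * (2 ^ r) ^ (3 - s) * (meshT T r N n ^ s * (8 / (n : ℝ) ^ 3)) with hB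
  have hterm : ∀ j ∈ Finset.Icc (n / 2) (n - 2),
      meshTau T r N (j + 1) ^ 3 * meshT T r N j ^ (s - 3) ≤ B := by
    intro j hj
    rw [Finset.mem_Icc] at hj
    have hjn : ((n : ℝ) / 2) ^ 3 ≤ ((j + 1 : ℕ) : ℝ) ^ 3 := by
      gcongr
      rw [div_le_iff₀ two_pos]
      exact_mod_cast (by omega : n ≤ (j + 1) * 2)
    have h := meshTau_pow_mul_rpow_le hT hr hN (by omega : 2 ≤ j + 1) 3 (s := s)
      (by exact_mod_cast hs3)
    simp only [Nat.add_sub_cancel, Nat.cast_ofNat] at h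
    refine h.trans (mul_le_mul_of_nonneg_left ?_ (by positivity))
    have htn := Real.rpow_le_rpow (meshT_pos hT hN (Nat.succ_ne_zero j)).le
      (meshT_monotone (N := N) hT.le hr0 (by omega : j + 1 ≤ n)) hs0
    calc meshT T r N (j + 1) ^ s / ((j + 1 : ℕ) : ℝ) ^ 3
        ≤ meshT T r N n ^ s / ((n : ℝ) / 2) ^ 3 := by gcongr
      _ = meshT T r N n ^ s * (8 / (n : ℝ) ^ 3) := by ring
  have hcard : ((Finset.Icc (n / 2) (n - 2)).card : ℝ) ≤ n := by
    rw [Nat.card_Icc]; exact_mod_cast (by omega)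
  have hB0 : 0 ≤ B := by positivity
  calc _ ≤ (Finset.Icc (n / 2) (n - 2)).card • B := Finset.sum_le_card_nsmul _ _ _ hterm
    _ ≤ n * B := by rw [nsmul_eq_mul]; gcongr
    _ = 8 * r ^ 3 * (2 ^ r) ^ (3 - s) * (meshT T r N n ^ s / (n : ℝ) ^ 2) := by
      rw [hB]; field_simp

end GradedMesh

/-- For the graded mesh and `0 < α < 1`, there is `C = C(r, α, T)` such that for every
`2 ≤ n ≤ N` both `Σ_{j=⌊n/2⌋}^{n-2} τ_{j+1}³ t_j^{α-2} ≤ C N^{-r(1+α)} n^{r(1+α)-2}`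
and `τ_n² t_{n-1}^{α-1} ≤ C N^{-r(1+α)} n^{r(1+α)-2}` hold. -/
theorem stmt15 (T r α : ℝ) (hT : 0 < T) (hr : 1 ≤ r) (hα0 : 0 < α) (hα1 : α < 1) :
    ∃ C : ℝ, 0 < C ∧ ∀ N : ℕ, 2 ≤ N → ∀ n : ℕ, 2 ≤ n → n ≤ N →
      (∑ j ∈ Finset.Icc (n / 2) (n - 2),
          (meshTau T r N (j + 1)) ^ 3 * (meshT T r N j) ^ (α - 2)) ≤
        C * (N : ℝ) ^ (-(r * (1 + α))) * (n : ℝ) ^ (r * (1 + α) - 2) ∧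
      (meshTau T r N n) ^ 2 * (meshT T r N (n - 1)) ^ (α - 1) ≤
        C * (N : ℝ) ^ (-(r * (1 + α))) * (n : ℝ) ^ (r * (1 + α) - 2) := by
  set K₁ := 8 * r ^ 3 * (2 ^ r) ^ (3 - (1 + α))
  set K₂ := r ^ 2 * (2 ^ r) ^ (2 - (1 + α))
  have hr0 : 0 < r := zero_lt_one.trans_le hr
  refine ⟨(K₁ + K₂) * T ^ (1 + α), by positivity, fun N hN n hn _ => ?_⟩
  have hN0 : N ≠ 0 := by omega
  have hRHS : (K₁ + K₂) * T ^ (1 + α) * (N : ℝ) ^ (-(r * (1 + α))) *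
      (n : ℝ) ^ (r * (1 + α) - 2) = (K₁ + K₂) * (meshT T r N n ^ (1 + α) / (n : ℝ) ^ 2) := by
    rw [meshT_rpow_div_sq hT.le (by omega)]; ring
  have hsum := sum_meshTau_cube_mul_rpow_le hT hr hN0 hn (s := 1 + α) (by linarith) (by linarith)
  have hlast := meshTau_pow_mul_rpow_le hT hr hN0 hn 2 (s := 1 + α) (by push_cast; linarith)
  rw [show (1 + α) - 3 = α - 2 by ring] at hsum
  rw [show (1 + α) - ((2 : ℕ) : ℝ) = α - 1 by push_cast; ring, Nat.cast_ofNat] at hlast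
  have hX : 0 ≤ meshT T r N n ^ (1 + α) / (n : ℝ) ^ 2 :=
    div_nonneg (Real.rpow_nonneg (meshT_nonneg hT.le n) _) (by positivity)
  have hK₁X : 0 ≤ K₁ * (meshT T r N n ^ (1 + α) / (n : ℝ) ^ 2) := mul_nonneg (by positivity) hX
  have hK₂X : 0 ≤ K₂ * (meshT T r N n ^ (1 + α) / (n : ℝ) ^ 2) := mul_nonneg (by positivity) hX
  rw [hRHS]
  constructor <;> linarith
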